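/- arXiv:2405.11878 — 2 statements merged into one kernel-verified Lean document; each statement's English description precedes it below -/
import Mathlib

section
/- Assume M = acl(A). Then Aut(M/A), equipped with the pointwise convergence topology, is a compact, totally disconnected topological group (i.e., a profinite group). -/
open FirstOrder FirstOrder.Language

universe u v w

section Defs

variable (L : FirstOrder.Language.{u, v}) (M : Type w) [L.Structure M]

/-- `Aut(M/A)`: the group of `L`-automorphisms of `M` fixing `A` pointwise, realized as a
subgroup of `Equiv.Perm M`. -/
def autFix (A : Set M) : Subgroup (Equiv.Perm M) where
  carrier := {σ | (∃ e : M ≃[L] M, ⇑e = ⇑σ) ∧ ∀ a ∈ A, σ a = a}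
  one_mem' := ⟨⟨Language.Equiv.refl L M, funext fun x => by simp⟩, fun a _ => rfl⟩
  mul_mem' := by
    rintro σ τ ⟨⟨e, he⟩, hσ⟩ ⟨⟨f, hf⟩, hτ⟩
    refine ⟨⟨e.comp f, funext fun x => ?_⟩, fun a ha => ?_⟩
    · simp only [Language.Equiv.comp_apply, he, hf]; rfl
    · simp only [Equiv.Perm.mul_apply, hτ a ha, hσ a ha]
  inv_mem' := by
    rintro σ ⟨⟨e, he⟩, hσ⟩
    refine ⟨⟨e.symm, funext fun x => ?_⟩, fun a ha => ?_⟩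
    · have : e (σ⁻¹ x) = x := by rw [show (e : M → M) = ⇑σ from he]; simp
      simpa using congrArg e.symm this |>.symm.trans (by simp)
    · have : σ a = a := hσ a ha
      calc σ⁻¹ a = σ⁻¹ (σ a) := by rw [this]
      _ = a := by simp

variable {L M}

/-- `M = acl(A)`: every element of `M` satisfies some formula with parameters from `A` having
only finitely many realizations in `M`. -/
def IsAclOver (A : Set M) : Prop :=
  ∀ x : M, ∃ φ : (L[[A]]).Formula (Fin 1),
    φ.Realize (fun _ => x) ∧ {y : M | φ.Realize (fun _ => y)}.Finite

/-- The pointwise convergence topology on `Aut(M/A)`: the topology induced from the product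
topology on the set of all functions `M → M`, where `M` is given the discrete topology. -/
def autTop (A : Set M) : TopologicalSpace (autFix L M A) :=
  letI : TopologicalSpace M := ⊥
  TopologicalSpace.induced (fun σ => ((σ : Equiv.Perm M) : M → M)) Pi.topologicalSpace

end Defs

variable {L : FirstOrder.Language.{u, v}} {M : Type w} [L.Structure M]

/-- An `L`-automorphism fixing `A` pointwise is an `L[[A]]`-automorphism. -/
def equivWithConstants (A : Set M) (e : M ≃[L] M) (he : ∀ a ∈ A, e a = a) :
    M ≃[L[[A]]] M where
  toEquiv := e.toEquiv
  map_fun' := by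
    rintro n (f | f) x
    · exact e.map_fun' f x
    · match n, f with
      | 0, f => exact he f f.2
  map_rel' := by
    rintro n (r | r) x
    · exact e.map_rel' r x
    · exact isEmptyElim r

lemma realize_fix {A : Set M} (e : M ≃[L] M) (he : ∀ a ∈ A, e a = a)
    (φ : (L[[A]]).Formula (Fin 1)) {x : M} (hx : φ.Realize (fun _ => x)) :
    φ.Realize (fun _ => e x) :=
  (StrongHomClass.realize_formula (equivWithConstants A e he) φ (v := fun _ => x)).2 hx

/-- If `M = acl(A)` then `Aut(M/A)`, with the pointwise convergence topology, is a compact,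
totally disconnected topological group (i.e. a profinite group). -/
theorem statement7 (A : Set M) (hacl : IsAclOver (L := L) A) :
    @CompactSpace (autFix L M A) (autTop (L := L) A) ∧
    @TotallyDisconnectedSpace (autFix L M A) (autTop (L := L) A) ∧
    @IsTopologicalGroup (autFix L M A) (autTop (L := L) A) _ := by
  classical
  letI : TopologicalSpace M := ⊥
  haveI : DiscreteTopology M := ⟨rfl⟩
  letI : TopologicalSpace (autFix L M A) := autTop (L := L) A
  set ι : autFix L M A → (M → M) := fun σ => ((σ : Equiv.Perm M) : M → M) with hι
  have hind : Topology.IsInducing ι := ⟨rfl⟩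
  have hinj : Function.Injective ι := fun σ τ h =>
    Subtype.ext (Equiv.coe_fn_injective h)
  have hemb : Topology.IsEmbedding ι := ⟨hind, hinj⟩
  choose φ hφ hfin using hacl
  set T : M → Set M := fun x => {y : M | (φ x).Realize (fun _ => y)} with hT
  have hxT : ∀ x, x ∈ T x := fun x => hφ x
  have hTfin : ∀ x, (T x).Finite := hfin
  -- automorphisms preserve the sets T x
  have hpres : ∀ (σ : autFix L M A) (x y : M), y ∈ T x → ι σ y ∈ T x := by
    rintro ⟨σ, ⟨e, he⟩, hfix⟩ x y hy
    have he' : ∀ a ∈ A, e a = a := fun a ha => by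
      rw [show (e : M → M) = ⇑σ from he]; exact hfix a ha
    have h1 : (φ x).Realize (fun _ => e y) := realize_fix e he' (φ x) hy
    have hey : ι ⟨σ, ⟨e, he⟩, hfix⟩ y = e y := by
      show σ y = e y
      rw [show (e : M → M) = ⇑σ from he]
    rw [hey]; exact h1
  set S : Set (M → M) := Set.range ι with hS
  -- finite approximation from the closure
  have happrox : ∀ f ∈ closure S, ∀ t : Finset M,
      ∃ σ : autFix L M A, ∀ x ∈ t, ι σ x = f x := by
    intro f hf t
    have hopen : IsOpen {g : M → M | ∀ x ∈ t, g x = f x} := by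
      have heq : {g : M → M | ∀ x ∈ t, g x = f x} =
          ⋂ x ∈ t, (fun g : M → M => g x) ⁻¹' {f x} := by
        ext g; simp
      rw [heq]
      exact isOpen_biInter_finset fun x _ =>
        (continuous_apply x).isOpen_preimage _ (isOpen_discrete _)
    obtain ⟨g, hg1, σ, rfl⟩ := mem_closure_iff.1 hf _ hopen (fun x _ => rfl)
    exact ⟨σ, hg1⟩
  -- S is closed
  have hSclosed : IsClosed S := by
    rw [← closure_eq_iff_isClosed]
    refine Set.Subset.antisymm (fun f hf => ?_) subset_closure
    -- f is injective
    have hinjf : Function.Injective f := by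
      intro x y hxy
      obtain ⟨σ, hσ⟩ := happrox f hf {x, y}
      rw [← hσ x (by simp), ← hσ y (by simp)] at hxy
      exact (σ : Equiv.Perm M).injective hxy
    -- f maps each T x into itself
    have hmaps : ∀ x, Set.MapsTo f (T x) (T x) := by
      intro x y hy
      obtain ⟨σ, hσ⟩ := happrox f hf {y}
      rw [← hσ y (by simp)]
      exact hpres σ x y hy
    -- f is surjective
    have hsurjf : Function.Surjective f := by
      intro y
      haveI : Finite (T y) := (hTfin y).to_subtype
      have hres : Function.Injective ((hmaps y).restrict f (T y) (T y)) := by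
        intro a b hab
        have := congrArg Subtype.val hab
        exact Subtype.ext (hinjf this)
      obtain ⟨⟨x, hx⟩, hxy⟩ := Finite.surjective_of_injective hres ⟨y, hxT y⟩
      exact ⟨x, congrArg Subtype.val hxy⟩
    -- f preserves functions
    have hfun : ∀ {n} (F : L.Functions n) (x : Fin n → M),
        f (Structure.funMap F x) = Structure.funMap F (f ∘ x) := by
      intro n F x
      obtain ⟨σ, hσ⟩ := happrox f hf (insert (Structure.funMap F x) (Finset.image x Finset.univ))
      obtain ⟨e, he⟩ := σ.2.1
      have hcoe : (e : M → M) = ι σ := he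
      have hx' : ∀ i, f (x i) = e (x i) := fun i => by
        rw [← hσ (x i) (Finset.mem_insert_of_mem (Finset.mem_image_of_mem x (Finset.mem_univ i))), ← hcoe]
      calc f (Structure.funMap F x) = ι σ (Structure.funMap F x) := (hσ _ (by simp)).symm
        _ = e (Structure.funMap F x) := by rw [hcoe]
        _ = Structure.funMap F (e ∘ x) := e.map_fun' F x
        _ = Structure.funMap F (f ∘ x) := by
            congr 1; funext i; exact (hx' i).symm
    -- f preserves relations
    have hrel : ∀ {n} (r : L.Relations n) (x : Fin n → M),
        Structure.RelMap r (f ∘ x) ↔ Structure.RelMap r x := by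
      intro n r x
      obtain ⟨σ, hσ⟩ := happrox f hf (Finset.image x Finset.univ)
      obtain ⟨e, he⟩ := σ.2.1
      have hcoe : (e : M → M) = ι σ := he
      have hx' : ∀ i, f (x i) = e (x i) := fun i => by
        rw [← hσ (x i) (Finset.mem_image_of_mem x (Finset.mem_univ i)), ← hcoe]
      have : f ∘ x = e ∘ x := by funext i; exact hx' i
      rw [this]
      exact e.map_rel' r x
    -- f fixes A
    have hfixf : ∀ a ∈ A, f a = a := by
      intro a ha
      obtain ⟨σ, hσ⟩ := happrox f hf {a}
      rw [← hσ a (by simp)]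
      exact σ.2.2 a ha
    -- assemble the automorphism
    refine ⟨⟨Equiv.ofBijective f ⟨hinjf, hsurjf⟩,
      ⟨⟨{ toEquiv := Equiv.ofBijective f ⟨hinjf, hsurjf⟩
          map_fun' := fun {n} F x => hfun F x
          map_rel' := fun {n} r x => hrel r x }, rfl⟩,
        hfixf⟩⟩, rfl⟩
  -- S is compact
  have hScompact : IsCompact S := by
    have hsub : S ⊆ Set.pi Set.univ T := by
      rintro _ ⟨σ, rfl⟩ x _
      exact hpres σ x x (hxT x)
    exact (isCompact_univ_pi fun x => (hTfin x).isCompact).of_isClosed_subset hSclosed hsub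
  refine ⟨?_, ?_, ?_⟩
  · exact ⟨hemb.isCompact_iff.mpr (by rw [Set.image_univ]; exact hScompact)⟩
  · exact hemb.isTotallyDisconnected_range.mp
      (isTotallyDisconnected_of_totallyDisconnectedSpace _)
  · refine { continuous_mul := ?_, continuous_inv := ?_ }
    · refine hind.continuous_iff.2 (continuous_pi fun x => continuous_discrete_rng.2 fun y => ?_)
      have heq : (fun p : autFix L M A × autFix L M A => ι (p.1 * p.2) x) ⁻¹' {y} =
          ⋃ z, ((fun p : autFix L M A × autFix L M A => ι p.2 x) ⁻¹' {z}) ∩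
            ((fun p : autFix L M A × autFix L M A => ι p.1 z) ⁻¹' {y}) := by
        ext p
        simp only [Set.mem_preimage, Set.mem_singleton_iff, Set.mem_iUnion, Set.mem_inter_iff]
        constructor
        · intro h
          exact ⟨ι p.2 x, rfl, h⟩
        · rintro ⟨z, h1, h2⟩
          rw [show ι (p.1 * p.2) x = ι p.1 (ι p.2 x) from rfl, h1, h2]
      show IsOpen ((fun p : autFix L M A × autFix L M A => ι (p.1 * p.2) x) ⁻¹' {y})
      rw [heq]
      refine isOpen_iUnion fun z => IsOpen.inter ?_ ?_
      · exact (((continuous_apply x).comp hind.continuous).comp continuous_snd).isOpen_preimage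
          _ (isOpen_discrete _)
      · exact (((continuous_apply z).comp hind.continuous).comp continuous_fst).isOpen_preimage
          _ (isOpen_discrete _)
    · refine hind.continuous_iff.2 (continuous_pi fun x => continuous_discrete_rng.2 fun y => ?_)
      have heq : (fun σ : autFix L M A => ι σ⁻¹ x) ⁻¹' {y} =
          (fun σ : autFix L M A => ι σ y) ⁻¹' {x} := by
        ext σ
        simp only [Set.mem_preimage, Set.mem_singleton_iff]
        constructor
        · intro h
          rw [← h]
          show (σ : Equiv.Perm M) (((σ : Equiv.Perm M))⁻¹ x) = x
          simp
        · intro h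
          show ((σ : Equiv.Perm M))⁻¹ x = y
          rw [← h]
          show ((σ : Equiv.Perm M))⁻¹ ((σ : Equiv.Perm M) y) = y
          simp
      show IsOpen ((fun σ : autFix L M A => ι σ⁻¹ x) ⁻¹' {y})
      rw [heq]
      exact ((continuous_apply y).comp hind.continuous).isOpen_preimage _ (isOpen_discrete _)
end

section
/- Assume M is atomic and strongly ω-homogeneous over A. A subgroup H of Aut(M/A) is a definable subset of Aut(M/A) if and only if there exist a natural number n, an n-tuple b̄ from M, and an L-formula ε(x̄,ȳ) with parameters from A, in two n-tuples of free variables, which defines an equivalence relation on Mⁿ, such that H = {σ ∈ Aut(M/A) : M ⊨ ε(σ(b̄), b̄)} (i.e., H is the stabilizer of the ε-class of b̄; in other words, the definable subgroups of Aut(M/A) are precisely the fixators Fix(e) of imaginary elements e). -/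
open FirstOrder FirstOrder.Language

universe u v w

section Defs

variable (L : FirstOrder.Language.{u, v}) (M : Type w) [L.Structure M]

variable {L M}

/-- A subset of `Aut(M/A)` is definable if it is cut out, via some finite tuple `b` from `M`,
by a formula `φ(x̄, ȳ)` with parameters in `A`, as
`{σ ∈ Aut(M/A) : M ⊨ φ(σ(b̄), b̄)}`. -/
def IsDefinableSubset (A : Set M) (X : Set (autFix L M A)) : Prop :=
  ∃ (n : ℕ) (φ : (L[[A]]).Formula (Fin n ⊕ Fin n)) (b : Fin n → M),
    X = {σ : autFix L M A | φ.Realize (Sum.elim (fun i => σ.1 (b i)) b)}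

/-- `M` is atomic over `A`: the type over `A` of every finite tuple from `M` is isolated. -/
def AtomicOver (A : Set M) : Prop :=
  ∀ (n : ℕ) (b : Fin n → M), ∃ ψ : (L[[A]]).Formula (Fin n),
    ψ.Realize b ∧ ∀ χ : (L[[A]]).Formula (Fin n), χ.Realize b →
      ∀ a : Fin n → M, ψ.Realize a → χ.Realize a

/-- `M` is strongly `ω`-homogeneous over `A`: any two finite tuples satisfying the same
formulas with parameters from `A` are conjugate under `Aut(M/A)`. -/
def StronglyOmegaHomOver (A : Set M) : Prop :=
  ∀ (n : ℕ) (a b : Fin n → M),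
    (∀ φ : (L[[A]]).Formula (Fin n), φ.Realize a ↔ φ.Realize b) →
    ∃ σ ∈ autFix L M A, ∀ i, σ (a i) = b i

end Defs

variable {L : FirstOrder.Language.{u, v}} {M : Type w} [L.Structure M]

/-- Lift an `L`-automorphism fixing `A` pointwise to an `L[[A]]`-automorphism. -/
def liftWithConstants {A : Set M} (σ : Equiv.Perm M)
    (h : (∃ e : M ≃[L] M, ⇑e = ⇑σ) ∧ ∀ a ∈ A, σ a = a) : M ≃[L[[A]]] M where
  toEquiv := σ
  map_fun' := by
    rintro n (f | c) x
    · obtain ⟨⟨e, he⟩, -⟩ := h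
      simp only [Equiv.toFun_as_coe, withConstants_funMap_sumInl, ← he]
      exact e.map_fun' f x
    · cases n with
      | zero =>
        change σ ((c : A) : M) = ((c : A) : M)
        exact h.2 c c.2
      | succ n => exact isEmptyElim c
  map_rel' := by
    rintro n (r | r) x
    · obtain ⟨⟨e, he⟩, -⟩ := h
      simp only [Equiv.toFun_as_coe, withConstants_relMap_sumInl, ← he]
      exact e.map_rel' r x
    · exact isEmptyElim r

theorem realize_perm_fix {A : Set M} {σ : Equiv.Perm M}
    (h : (∃ e : M ≃[L] M, ⇑e = ⇑σ) ∧ ∀ a ∈ A, σ a = a)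
    {α : Type*} (φ : (L[[A]]).Formula α) (v : α → M) :
    φ.Realize (⇑σ ∘ v) ↔ φ.Realize v :=
  StrongHomClass.realize_formula (liftWithConstants σ h) φ

/-- For `M` atomic and strongly `ω`-homogeneous over `A`: a subgroup `H` of `Aut(M/A)` is a
definable subset if and only if it is the stabilizer of the `ε`-class of some tuple `b̄`, for
some formula `ε` over `A` defining an equivalence relation on `Mⁿ`; i.e. the definable
subgroups are exactly the fixators of imaginaries. -/
theorem statement13 (A : Set M) (hat : AtomicOver (L := L) A) (hhom : StronglyOmegaHomOver (L := L) A)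
    (H : Subgroup (autFix L M A)) :
    IsDefinableSubset A (H : Set (autFix L M A)) ↔
    ∃ (n : ℕ) (b : Fin n → M) (ε : (L[[A]]).Formula (Fin n ⊕ Fin n)),
      (∀ a : Fin n → M, ε.Realize (Sum.elim a a)) ∧
      (∀ a c : Fin n → M, ε.Realize (Sum.elim a c) → ε.Realize (Sum.elim c a)) ∧
      (∀ a c d : Fin n → M, ε.Realize (Sum.elim a c) → ε.Realize (Sum.elim c d) →
        ε.Realize (Sum.elim a d)) ∧
      (H : Set (autFix L M A)) =
        {σ : autFix L M A | ε.Realize (Sum.elim (fun i => σ.1 (b i)) b)} := by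
  constructor
  · rintro ⟨n, φ, b, hH⟩
    obtain ⟨ψ, hψb, hiso⟩ := hat n b
    -- membership characterization
    have hmem : ∀ σ : autFix L M A,
        σ ∈ H ↔ φ.Realize (Sum.elim (fun i => σ.1 (b i)) b) := by
      intro σ
      rw [← SetLike.mem_coe, hH]; rfl
    -- conjugation fact
    have conj : ∀ σ τ : autFix L M A,
        φ.Realize (Sum.elim (fun i => σ.1 (b i)) (fun i => τ.1 (b i))) ↔ (τ⁻¹ * σ) ∈ H := by
      intro σ τ
      rw [hmem]
      rw [← realize_perm_fix τ.2 φ (Sum.elim (fun i => ((τ⁻¹ * σ : autFix L M A)).1 (b i)) b)]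
      apply iff_of_eq; congr 1
      funext x
      cases x with
      | inl i => simp
      | inr i => rfl
    -- equality of types
    have typeEq : ∀ c : Fin n → M, ψ.Realize c →
        ∀ χ : (L[[A]]).Formula (Fin n), χ.Realize b ↔ χ.Realize c := by
      intro c hc χ
      constructor
      · intro h; exact hiso χ h c hc
      · intro h
        by_contra hb
        exact Formula.realize_not.1 (hiso χ.not (Formula.realize_not.2 hb) c hc) h
    -- every realization of ψ is in the orbit of b
    have orbit : ∀ c : Fin n → M, ψ.Realize c →
        ∃ τ : autFix L M A, ∀ i, τ.1 (b i) = c i := by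
      intro c hc
      obtain ⟨τ, hτmem, hτ⟩ := hhom n b c (typeEq c hc)
      exact ⟨⟨τ, hτmem⟩, hτ⟩
    -- the equivalence formula
    set εf : (L[[A]]).Formula (Fin n ⊕ Fin n) :=
      (((ψ.relabel Sum.inl).not ⊓ (ψ.relabel Sum.inr).not) ⊔
        ((ψ.relabel Sum.inl) ⊓ (ψ.relabel Sum.inr) ⊓
          (((ψ.relabel Sum.inr).imp
            ((φ.relabel (Sum.elim (fun i => Sum.inl (Sum.inl i)) Sum.inr)).iff
             (φ.relabel (Sum.elim (fun i => Sum.inl (Sum.inr i)) Sum.inr)))).iAlls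
            (Fin n)))) with hεf
    have hε : ∀ a c : Fin n → M, εf.Realize (Sum.elim a c) ↔
        ((¬ ψ.Realize a ∧ ¬ ψ.Realize c) ∨
         (ψ.Realize a ∧ ψ.Realize c ∧
          ∀ d : Fin n → M, ψ.Realize d →
            (φ.Realize (Sum.elim a d) ↔ φ.Realize (Sum.elim c d)))) := by
      intro a c
      simp only [hεf, Formula.realize_sup, Formula.realize_inf, Formula.realize_not,
        Formula.realize_relabel, Formula.realize_iAlls, Formula.realize_imp, Formula.realize_iff,
        id_eq, Sum.elim_comp_inl, Sum.elim_comp_inr, Function.comp_def, Sum.elim_inl, Sum.elim_inr]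
      have k1 : ∀ (i : Fin n → M), (fun x => Sum.elim (Sum.elim a c) i
          (Sum.elim (fun j => Sum.inl (Sum.inl j)) Sum.inr x)) = Sum.elim a i :=
        fun i => funext fun x => by rcases x with x | x <;> rfl
      have k2 : ∀ (i : Fin n → M), (fun x => Sum.elim (Sum.elim a c) i
          (Sum.elim (fun j => Sum.inl (Sum.inr j)) Sum.inr x)) = Sum.elim c i :=
        fun i => funext fun x => by rcases x with x | x <;> rfl
      simp only [k1, k2]
      tauto
    refine ⟨n, b, εf, ?_, ?_, ?_, ?_⟩
    · intro a
      rw [hε]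
      by_cases ha : ψ.Realize a
      · exact Or.inr ⟨ha, ha, fun d _ => Iff.rfl⟩
      · exact Or.inl ⟨ha, ha⟩
    · intro a c h
      rw [hε] at h ⊢
      rcases h with ⟨h1, h2⟩ | ⟨h1, h2, h3⟩
      · exact Or.inl ⟨h2, h1⟩
      · exact Or.inr ⟨h2, h1, fun d hd => (h3 d hd).symm⟩
    · intro a c d h h'
      rw [hε] at h h' ⊢
      rcases h with ⟨h1, h2⟩ | ⟨h1, h2, h3⟩
      · rcases h' with ⟨h1', h2'⟩ | ⟨h1', h2', h3'⟩
        · exact Or.inl ⟨h1, h2'⟩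
        · exact absurd h1' h2
      · rcases h' with ⟨h1', h2'⟩ | ⟨h1', h2', h3'⟩
        · exact absurd h2 h1'
        · exact Or.inr ⟨h1, h2', fun e he => (h3 e he).trans (h3' e he)⟩
    · ext σ
      simp only [Set.mem_setOf_eq, SetLike.mem_coe]
      have hσψ : ψ.Realize (fun i => σ.1 (b i)) :=
        (realize_perm_fix σ.2 ψ b).2 hψb
      rw [hε]
      constructor
      · intro hσ
        refine Or.inr ⟨hσψ, hψb, fun d hd => ?_⟩
        obtain ⟨τ, hτ⟩ := orbit d hd
        have hd' : d = fun i => τ.1 (b i) := funext fun i => (hτ i).symm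
        subst hd'
        have c1 := conj σ τ
        have c2 := conj 1 τ
        simp only [OneMemClass.coe_one, Equiv.Perm.coe_one, id_eq, mul_one] at c2
        rw [c1, c2]
        constructor
        · intro h
          have := mul_mem h (inv_mem hσ)
          simpa [mul_assoc] using this
        · intro h
          exact mul_mem h hσ
      · rintro (⟨h1, -⟩ | ⟨-, -, h3⟩)
        · exact absurd hσψ h1
        · have hb := h3 b hψb
          have h1m := hmem (1 : autFix L M A)
          simp only [OneMemClass.coe_one, Equiv.Perm.coe_one, id_eq] at h1m
          rw [hmem]
          exact hb.2 (h1m.1 (one_mem H))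
  · rintro ⟨n, b, ε, -, -, -, hH⟩
    exact ⟨n, ε, b, hH⟩
end
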